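/- (Helstrom projection lemma.) Let σ and σ' be density matrices on a finite-dimensional complex Hilbert space, let γ, γ' > 0, set A = γσ − γ'σ', and let Π^+ and Π^− be the spectral projections of the Hermitian operator A onto the span of its eigenvectors with nonnegative and with negative eigenvalues, respectively. If δ ≥ 0 satisfies | Tr|A| − (γ + γ') | ≤ δ, then | Tr(Π^+ σ) − 1 | ≤ δ/(2γ) and | Tr(Π^− σ') − 1 | ≤ δ/(2γ'). -/

import Mathlib

open Matrix Filter
open scoped BigOperators ComplexOrder

noncomputable section

/-- Operators on the `n`-fold tensor power of a `d`-dimensional Hilbert space. -/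
abbrev MatPow (d n : ℕ) := Matrix (Fin n → Fin d) (Fin n → Fin d) ℂ

/-- A density matrix: positive semidefinite with unit trace. -/
def IsDensity {m : Type*} [Fintype m] (ρ : Matrix m m ℂ) : Prop :=
  ρ.PosSemidef ∧ ρ.trace = 1

/-- Loewner order `A ≤ B`. -/
def Loewner {m : Type*} [Fintype m] (A B : Matrix m m ℂ) : Prop := (B - A).PosSemidef

/-- An orthogonal projection. -/
def IsProjection {m : Type*} [Fintype m] (P : Matrix m m ℂ) : Prop :=
  P.IsHermitian ∧ P * P = P

/-- Positive semidefinite square root (zero on non-PSD input). -/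
def psqrt {m : Type*} [Fintype m] [DecidableEq m] (A : Matrix m m ℂ) : Matrix m m ℂ :=
  letI := Classical.propDecidable A.PosSemidef
  if h : A.PosSemidef then
    (h.1.eigenvectorUnitary : Matrix m m ℂ) *
      Matrix.diagonal ((↑) ∘ Real.sqrt ∘ h.1.eigenvalues) *
      star (h.1.eigenvectorUnitary : Matrix m m ℂ)
  else 0

/-- Fidelity `F(A,B) = Tr √(√A B √A)` of positive semidefinite operators. -/
def fidelity {m : Type*} [Fintype m] [DecidableEq m] (A B : Matrix m m ℂ) : ℝ :=
  ((psqrt (psqrt A * B * psqrt A)).trace).re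

/-- The trace norm `Tr |A| = Tr √(Aᴴ A)`. -/
def traceNorm {m : Type*} [Fintype m] [DecidableEq m] (A : Matrix m m ℂ) : ℝ :=
  ((psqrt (Aᴴ * A)).trace).re

/-- Von Neumann entropy `S(ρ) = -Tr(ρ log₂ ρ)` (via eigenvalues, base-2 logarithm). -/
def vnEntropy {m : Type*} [Fintype m] [DecidableEq m] (ρ : Matrix m m ℂ) : ℝ :=
  if h : ρ.IsHermitian then -∑ i, h.eigenvalues i * Real.logb 2 (h.eigenvalues i) else 0

/-- Linear maps from operators on an `a`-dimensional space to operators on a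
`b`-dimensional space. -/
abbrev QChannelMap (a b : ℕ) := Matrix (Fin a) (Fin a) ℂ →ₗ[ℂ] Matrix (Fin b) (Fin b) ℂ

/-- The Choi matrix of a linear map. -/
def choiMatrix {a b : ℕ} (Φ : QChannelMap a b) : Matrix (Fin a × Fin b) (Fin a × Fin b) ℂ :=
  Matrix.of fun p p' => Φ (Matrix.single p.1 p'.1 1) p.2 p'.2

/-- Completely positive (positive semidefinite Choi matrix) and trace preserving. -/
def IsCPTP {a b : ℕ} (Φ : QChannelMap a b) : Prop :=
  (choiMatrix Φ).PosSemidef ∧ ∀ ρ : Matrix (Fin a) (Fin a) ℂ, (Φ ρ).trace = ρ.trace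

/-- The `n`-fold tensor product map `Φs 0 ⊗ ⋯ ⊗ Φs (n-1)`. -/
def tensChan {a b : ℕ} (n : ℕ) (Φs : Fin n → QChannelMap a b) (ρ : MatPow a n) :
    MatPow b n :=
  Matrix.of fun y y' => ∑ x : Fin n → Fin a, ∑ x' : Fin n → Fin a,
    ρ x x' * ∏ k, Φs k (Matrix.single (x k) (x' k) 1) (y k) (y' k)

/-- The Markov weight `γ_{i₁} q_{i₁ i₂} ⋯ q_{i_{n-1} i_n}` of a trajectory. -/
def chainWt {I : Type*} (q : I → I → ℝ) (γ : I → ℝ) {n : ℕ} (i : Fin n → I) : ℝ :=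
  ∏ k : Fin n, if k.val = 0 then γ (i k)
    else q (i ⟨k.val - 1, Nat.lt_of_le_of_lt (Nat.pred_le _) k.isLt⟩) (i k)

/-- The memory channel `Φ^{(n)}` with Markovian correlated noise. -/
def memChan {I : Type*} [Fintype I] {a b : ℕ} (q : I → I → ℝ) (γ : I → ℝ)
    (Φ : I → QChannelMap a b) (n : ℕ) (ρ : MatPow a n) : MatPow b n :=
  ∑ i : Fin n → I, chainWt q γ i • tensChan n (fun k => Φ (i k)) ρ

/-- `γ_C = ∑_{i ∈ C} γ_i`. -/
def gammaC {I : Type*} [Fintype I] [DecidableEq I] (γ : I → ℝ) (C : Finset I) : ℝ :=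
  ∑ i ∈ C, γ i

/-- The channel `Φ_C^{(n)}` restricted to the class `C`. -/
def classChan {I : Type*} [Fintype I] [DecidableEq I] {a b : ℕ} (q : I → I → ℝ)
    (γ : I → ℝ) (Φ : I → QChannelMap a b) (C : Finset I) (n : ℕ) (ρ : MatPow a n) :
    MatPow b n :=
  (gammaC γ C)⁻¹ • ∑ i : Fin n → {x // x ∈ C},
    chainWt q γ (fun k => (i k : I)) • tensChan n (fun k => Φ (i k : I)) ρ

/-- The transition matrix of the Markov chain. -/
def qMatrix {I : Type*} [Fintype I] (q : I → I → ℝ) : Matrix I I ℝ := Matrix.of q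

/-- `j` is accessible from `i`. -/
def Accessible {I : Type*} [Fintype I] [DecidableEq I] (q : I → I → ℝ) (i j : I) : Prop :=
  ∃ n : ℕ, 0 < (qMatrix q ^ n) i j

/-- `i` and `j` communicate. -/
def Communicates {I : Type*} [Fintype I] [DecidableEq I] (q : I → I → ℝ) (i j : I) : Prop :=
  Accessible q i j ∧ Accessible q j i

/-- `C` is a communicating class. -/
def IsCommClass {I : Type*} [Fintype I] [DecidableEq I] (q : I → I → ℝ) (C : Finset I) :
    Prop :=
  ∃ i : I, ∀ j, j ∈ C ↔ Communicates q i j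

/-- The class `C` is aperiodic: for each of its states, the gcd of the return
times is `1`. -/
def IsAperiodicClass {I : Type*} [Fintype I] [DecidableEq I] (q : I → I → ℝ)
    (C : Finset I) : Prop :=
  ∀ i ∈ C, ∀ d : ℕ, (∀ n : ℕ, 0 < n → 0 < (qMatrix q ^ n) i i → d ∣ n) → d = 1

/-- The class `C` is a (deterministic) periodic cycle `i₀ → i₁ → ⋯ → i_{L-1} → i₀` of
period `L ≥ 2`, enumerated by the `L`-periodic function `e : ℕ → I`. -/
def IsPeriodicCycle {I : Type*} [Fintype I] [DecidableEq I] (q : I → I → ℝ)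
    (C : Finset I) (L : ℕ) (e : ℕ → I) : Prop :=
  2 ≤ L ∧ (∀ k, e (k + L) = e k) ∧ (∀ j, j ∈ C ↔ ∃ k < L, e k = j) ∧
    (∀ k k', k < L → k' < L → e k = e k' → k = k') ∧ ∀ k, q (e k) (e (k + 1)) = 1

/-- The branch channel `Φ_{C,i_k}^{(n)} = Φ_{i_k} ⊗ Φ_{i_{k+1}} ⊗ ⋯ ⊗ Φ_{i_{k+n-1}}`
of a periodic cycle enumerated by `e`, started at position `k`. -/
def cycleChan {I : Type*} {a b : ℕ} (Φ : I → QChannelMap a b) (e : ℕ → I) (k n : ℕ)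
    (ρ : MatPow a n) : MatPow b n :=
  tensChan n (fun r => Φ (e (k + r.val))) ρ

/-- A finite ensemble of density matrices. -/
def IsEnsemble {m : Type*} [Fintype m] {J : ℕ} (p : Fin J → ℝ)
    (ρ : Fin J → Matrix m m ℂ) : Prop :=
  (∀ j, 0 ≤ p j) ∧ ∑ j, p j = 1 ∧ ∀ j, IsDensity (ρ j)

/-- Mean Holevo quantity of an ensemble for an aperiodic class `C`. -/
def holevoAper {I : Type*} [Fintype I] [DecidableEq I] {a b : ℕ} (q : I → I → ℝ)
    (γ : I → ℝ) (Φ : I → QChannelMap a b) (C : Finset I) (n : ℕ) {J : ℕ}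
    (p : Fin J → ℝ) (ρ : Fin J → MatPow a n) : ℝ :=
  (1 / (n : ℝ)) * (vnEntropy (∑ j, p j • classChan q γ Φ C n (ρ j)) -
    ∑ j, p j * vnEntropy (classChan q γ Φ C n (ρ j)))

/-- Mean Holevo quantity of an ensemble for a periodic cycle of period `L`
enumerated by `e`. -/
def holevoCyc {I : Type*} {a b : ℕ} (Φ : I → QChannelMap a b) (e : ℕ → I) (L n : ℕ)
    {J : ℕ} (p : Fin J → ℝ) (ρ : Fin J → MatPow a n) : ℝ :=
  (1 / ((n : ℝ) * L)) * ∑ k : Fin L,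
    (vnEntropy (cycleChan Φ e k.val n (∑ j, p j • ρ j)) -
      ∑ j, p j * vnEntropy (cycleChan Φ e k.val n (ρ j)))

/-- The mean Holevo quantity `χ̄_C^{(n)}` of a communicating class. -/
def chibarC {I : Type*} [Fintype I] [DecidableEq I] {a b : ℕ} (q : I → I → ℝ)
    (γ : I → ℝ) (Φ : I → QChannelMap a b) (C : Finset I) (n : ℕ) {J : ℕ}
    (p : Fin J → ℝ) (ρ : Fin J → MatPow a n) : ℝ :=
  letI := Classical.propDecidable (∃ L e, IsPeriodicCycle q C L e)
  if h : ∃ L e, IsPeriodicCycle q C L e then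
    holevoCyc Φ h.choose_spec.choose h.choose n p ρ
  else holevoAper q γ Φ C n p ρ

/-- `χ̄_n`: the supremum over ensembles of the minimum over communicating classes
(of positive weight) of the mean Holevo quantities. -/
def chibar {I : Type*} [Fintype I] [DecidableEq I] {a b : ℕ} (q : I → I → ℝ)
    (γ : I → ℝ) (Φ : I → QChannelMap a b) (n : ℕ) : ℝ :=
  sSup {x : ℝ | ∃ (J : ℕ) (p : Fin J → ℝ) (ρ : Fin J → MatPow a n),
    IsEnsemble p ρ ∧
    x = sInf {y : ℝ | ∃ C : Finset I, IsCommClass q C ∧ 0 < gammaC γ C ∧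
      y = chibarC q γ Φ C n p ρ}}

/-- The `n`-use Holevo quantity of the memory channel. -/
def chiN {I : Type*} [Fintype I] {a b : ℕ} (q : I → I → ℝ) (γ : I → ℝ)
    (Φ : I → QChannelMap a b) (n : ℕ) : ℝ :=
  sSup {x : ℝ | ∃ (J : ℕ) (p : Fin J → ℝ) (ρ : Fin J → MatPow a n),
    IsEnsemble p ρ ∧
    x = (1 / (n : ℝ)) * (vnEntropy (∑ j, p j • memChan q γ Φ n (ρ j)) -
      ∑ j, p j * vnEntropy (memChan q γ Φ n (ρ j)))}

/-- A code: densities as codewords and a sub-POVM as decoder. -/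
def IsCode {a b : ℕ} (n N : ℕ) (ρ : Fin N → MatPow a n) (E : Fin N → MatPow b n) : Prop :=
  (∀ k, IsDensity (ρ k)) ∧ (∀ k, (E k).PosSemidef) ∧ Loewner (∑ k, E k) 1

/-- Average probability of error of a code for the memory channel. -/
def avgErr {I : Type*} [Fintype I] {a b : ℕ} (q : I → I → ℝ) (γ : I → ℝ)
    (Φ : I → QChannelMap a b) (n N : ℕ) (ρ : Fin N → MatPow a n)
    (E : Fin N → MatPow b n) : ℝ :=
  (1 / (N : ℝ)) * ∑ k, (1 - ((memChan q γ Φ n (ρ k) * E k).trace).re)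

/-- `R` is an achievable rate for the memory channel. -/
def AchievableRate {I : Type*} [Fintype I] {a b : ℕ} (q : I → I → ℝ) (γ : I → ℝ)
    (Φ : I → QChannelMap a b) (R : ℝ) : Prop :=
  0 ≤ R ∧ ∃ (N : ℕ → ℕ) (ρ : ∀ n, Fin (N n) → MatPow a n)
    (E : ∀ n, Fin (N n) → MatPow b n),
    (∀ n, IsCode n (N n) (ρ n) (E n)) ∧
    (∀ n : ℕ, (2 : ℝ) ^ ((n : ℝ) * R) ≤ (N n : ℝ)) ∧
    Tendsto (fun n => avgErr q γ Φ n (N n) (ρ n) (E n)) atTop (nhds 0)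

/-- The classical capacity: the supremum of achievable rates. -/
def capacity {I : Type*} [Fintype I] {a b : ℕ} (q : I → I → ℝ) (γ : I → ℝ)
    (Φ : I → QChannelMap a b) : ℝ :=
  sSup {R : ℝ | AchievableRate q γ Φ R}

/-- A stochastic matrix. -/
def IsStochastic {I : Type*} [Fintype I] (q : I → I → ℝ) : Prop :=
  (∀ i j, 0 ≤ q i j) ∧ ∀ i, ∑ j, q i j = 1

/-- An invariant probability distribution. -/
def IsInvariantDist {I : Type*} [Fintype I] (q : I → I → ℝ) (γ : I → ℝ) : Prop :=
  (∀ i, 0 ≤ γ i) ∧ ∑ i, γ i = 1 ∧ ∀ j, γ j = ∑ i, γ i * q i j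

/-- The chain is irreducible. -/
def IsIrreducibleChain {I : Type*} [Fintype I] [DecidableEq I] (q : I → I → ℝ) : Prop :=
  ∀ i j, Accessible q i j

/-- The chain is aperiodic. -/
def IsAperiodicChain {I : Type*} [Fintype I] [DecidableEq I] (q : I → I → ℝ) : Prop :=
  ∀ i : I, ∀ d : ℕ, (∀ n : ℕ, 0 < n → 0 < (qMatrix q ^ n) i i → d ∣ n) → d = 1

/-- The index of the `s`-th site of the `r`-th block. -/
def blockIdx {m l : ℕ} (r : Fin m) (s : Fin l) : Fin (m * l) :=
  ⟨r.val * l + s.val, by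
    have h1 := r.isLt
    have h2 := s.isLt
    calc r.val * l + s.val < r.val * l + l := Nat.add_lt_add_left h2 _
      _ = (r.val + 1) * l := by ring
      _ ≤ m * l := Nat.mul_le_mul_right _ h1⟩

/-- The tensor product `ρ 0 ⊗ ρ 1 ⊗ ⋯ ⊗ ρ (m-1)` of `m` states on `l` sites each. -/
def kronFam {d l : ℕ} {m : ℕ} (ρ : Fin m → MatPow d l) : MatPow d (m * l) :=
  Matrix.of fun x x' =>
    ∏ r : Fin m, ρ r (fun s => x (blockIdx r s)) (fun s => x' (blockIdx r s))

/-- The `m`-fold tensor power `ρ^{⊗ m}` of a state on `l` sites. -/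
def kronPow {d l : ℕ} (m : ℕ) (ρ : MatPow d l) : MatPow d (m * l) := kronFam fun _ => ρ

/-- The tensor product `τ 0 ⊗ ⋯ ⊗ τ (n-1)` of single-site states. -/
def kronSites {d n : ℕ} (τ : Fin n → Matrix (Fin d) (Fin d) ℂ) : MatPow d n :=
  Matrix.of fun x x' => ∏ r, τ r (x r) (x' r)

/-- The tensor product of a state on `a` sites and a state on `b` sites. -/
def kron2 {d a b : ℕ} (A : MatPow d a) (B : MatPow d b) : MatPow d (a + b) :=
  Matrix.of fun x x' =>
    A (fun s => x (Fin.castAdd b s)) (fun s => x' (Fin.castAdd b s)) *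
      B (fun t => x (Fin.natAdd a t)) (fun t => x' (Fin.natAdd a t))

/-- `A ⊗ 1 ⊗ B` on `(2m+k)·l` sites, where `A`, `B` act on the first and last `m·l`
sites respectively and the identity acts on the middle `k·l` sites. -/
def threeBlock {d : ℕ} (m k l : ℕ) (A B : MatPow d (m * l)) : MatPow d ((2 * m + k) * l) :=
  Matrix.of fun y y' =>
    A (fun s => y ⟨s.val, by
          have hs := s.isLt
          have h : m * l ≤ (2 * m + k) * l := Nat.mul_le_mul_right _ (by omega)
          omega⟩)
      (fun s => y' ⟨s.val, by
          have hs := s.isLt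
          have h : m * l ≤ (2 * m + k) * l := Nat.mul_le_mul_right _ (by omega)
          omega⟩) *
    (if (fun t : Fin (k * l) => y ⟨m * l + t.val, by
            have ht := t.isLt
            have h : (m + k) * l ≤ (2 * m + k) * l := Nat.mul_le_mul_right _ (by omega)
            have e : (m + k) * l = m * l + k * l := Nat.add_mul _ _ _
            omega⟩) =
        (fun t : Fin (k * l) => y' ⟨m * l + t.val, by
            have ht := t.isLt
            have h : (m + k) * l ≤ (2 * m + k) * l := Nat.mul_le_mul_right _ (by omega)
            have e : (m + k) * l = m * l + k * l := Nat.add_mul _ _ _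
            omega⟩)
      then (1 : ℂ) else 0) *
    B (fun s => y ⟨(m + k) * l + s.val, by
          have hs := s.isLt
          have e : (2 * m + k) * l = (m + k) * l + m * l := by
            rw [show 2 * m + k = (m + k) + m by omega, Nat.add_mul]
          omega⟩)
      (fun s => y' ⟨(m + k) * l + s.val, by
          have hs := s.isLt
          have e : (2 * m + k) * l = (m + k) * l + m * l := by
            rw [show 2 * m + k = (m + k) + m by omega, Nat.add_mul]
          omega⟩)


/-- The spectral projection of a Hermitian matrix onto the span of its eigenvectors
with nonnegative eigenvalues. -/
def specProjNonneg {d : ℕ} {A : Matrix (Fin d) (Fin d) ℂ} (hA : A.IsHermitian) :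
    Matrix (Fin d) (Fin d) ℂ :=
  (hA.eigenvectorUnitary : Matrix (Fin d) (Fin d) ℂ) *
    Matrix.diagonal (fun i => if 0 ≤ hA.eigenvalues i then (1 : ℂ) else 0) *
    star (hA.eigenvectorUnitary : Matrix (Fin d) (Fin d) ℂ)

/-! Diagonalise `A = γσ - γ'σ'` with eigenvalues `λᵢ`. Then `Tr |A| = ∑ |λᵢ|`, `Tr A = γ - γ'`
and `Tr (Π⁺ A) = ∑ max λᵢ 0 = (Tr |A| + Tr A) / 2`. Writing `x = Tr (Π⁺ σ) ≤ 1` and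
`y = Tr (Π⁺ σ') ≥ 0`, this says `γ x - γ' y = (Tr |A| + γ - γ') / 2 ≥ γ - δ / 2`, i.e.
`γ (1 - x) + γ' y ≤ δ / 2`, and both summands are nonnegative. -/

section Trace

variable {n : Type*} [Fintype n] [DecidableEq n]

open scoped MatrixOrder in
lemma Matrix.PosSemidef.re_trace_mul_nonneg {P Q : Matrix n n ℂ} (hP : P.PosSemidef)
    (hQ : Q.PosSemidef) : 0 ≤ (P * Q).trace.re := by
  obtain ⟨B, rfl⟩ := CStarAlgebra.nonneg_iff_eq_star_mul_self.mp hQ.nonneg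
  rw [← Matrix.mul_assoc, trace_mul_cycle]
  exact (RCLike.nonneg_iff.mp (hP.mul_mul_conjTranspose_same B).trace_nonneg).1

lemma re_trace_one_sub_mul {P Q : Matrix n n ℂ} (hQ : Q.trace = 1) :
    ((1 - P) * Q).trace.re = 1 - (P * Q).trace.re := by
  rw [Matrix.sub_mul, Matrix.one_mul, trace_sub, hQ, Complex.sub_re, Complex.one_re]

end Trace

namespace Matrix.IsHermitian

variable {n 𝕜 : Type*} [Fintype n] [DecidableEq n] [RCLike 𝕜] {A : Matrix n n 𝕜}

lemma cfc_id (hA : A.IsHermitian) : hA.cfc id = A := by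
  rw [← hA.cfc_eq, _root_.cfc_id ℝ A hA.isSelfAdjoint]

lemma cfc_mul (hA : A.IsHermitian) (f g : ℝ → ℝ) :
    hA.cfc (fun x => f x * g x) = hA.cfc f * hA.cfc g := by
  rw [IsHermitian.cfc, IsHermitian.cfc, IsHermitian.cfc, ← map_mul, diagonal_mul_diagonal]
  congr! with i
  simp

lemma cfc_one_sub (hA : A.IsHermitian) (f : ℝ → ℝ) :
    hA.cfc (fun x => 1 - f x) = 1 - hA.cfc f := by
  rw [IsHermitian.cfc, IsHermitian.cfc,
    ← map_one (Unitary.conjStarAlgAut 𝕜 (Matrix n n 𝕜) hA.eigenvectorUnitary), ← map_sub,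
    ← diagonal_one, diagonal_sub]
  congr! with i
  simp

lemma trace_cfc (hA : A.IsHermitian) (f : ℝ → ℝ) :
    (hA.cfc f).trace = ∑ i, (f (hA.eigenvalues i) : 𝕜) := by
  rw [IsHermitian.cfc, Unitary.conjStarAlgAut_apply, trace_mul_cycle,
    Unitary.coe_star_mul_self, Matrix.one_mul, trace_diagonal]
  rfl

lemma posSemidef_cfc (hA : A.IsHermitian) {f : ℝ → ℝ} (hf : ∀ x, 0 ≤ f x) :
    (hA.cfc f).PosSemidef := by
  rw [IsHermitian.cfc, Unitary.conjStarAlgAut_apply]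
  exact (PosSemidef.diagonal fun i => RCLike.ofReal_nonneg.mpr (hf _)).mul_mul_conjTranspose_same _

end Matrix.IsHermitian

section TraceNorm

open scoped MatrixOrder

variable {n : Type*} [Fintype n] [DecidableEq n]

lemma Matrix.PosSemidef.psqrt_eq_sqrt {A : Matrix n n ℂ} (hA : A.PosSemidef) :
    psqrt A = CFC.sqrt A := by
  rw [CFC.sqrt_eq_cfc, cfc_nnreal_eq_real _ A, hA.1.cfc_eq, psqrt, dif_pos hA]
  simp only [IsHermitian.cfc, Unitary.conjStarAlgAut_apply]
  congr! 3
  ext i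
  simp [max_eq_left (hA.eigenvalues_nonneg i)]

lemma traceNorm_eq_re_trace_abs (A : Matrix n n ℂ) : traceNorm A = (CFC.abs A).trace.re := by
  rw [traceNorm, (posSemidef_conjTranspose_mul_self A).psqrt_eq_sqrt]
  rfl

lemma Matrix.IsHermitian.traceNorm_eq_sum_abs_eigenvalues {A : Matrix n n ℂ}
    (hA : A.IsHermitian) : traceNorm A = ∑ i, |hA.eigenvalues i| := by
  rw [traceNorm_eq_re_trace_abs, CFC.abs_eq_cfc_norm A hA.isSelfAdjoint, hA.cfc_eq,
    hA.trace_cfc]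
  simp [Complex.re_sum]

end TraceNorm

section SpecProjNonneg

variable {d : ℕ} {A : Matrix (Fin d) (Fin d) ℂ}

lemma specProjNonneg_eq_cfc (hA : A.IsHermitian) :
    specProjNonneg hA = hA.cfc fun x => if 0 ≤ x then 1 else 0 := by
  rw [specProjNonneg, IsHermitian.cfc, Unitary.conjStarAlgAut_apply]
  congr! with i
  simp [apply_ite]

lemma posSemidef_specProjNonneg (hA : A.IsHermitian) : (specProjNonneg hA).PosSemidef := by
  rw [specProjNonneg_eq_cfc]
  exact hA.posSemidef_cfc fun x => by split_ifs <;> norm_num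

lemma posSemidef_one_sub_specProjNonneg (hA : A.IsHermitian) :
    (1 - specProjNonneg hA).PosSemidef := by
  rw [specProjNonneg_eq_cfc, ← hA.cfc_one_sub]
  exact hA.posSemidef_cfc fun x => by split_ifs <;> norm_num

lemma two_mul_re_trace_specProjNonneg_mul (hA : A.IsHermitian) :
    2 * (specProjNonneg hA * A).trace.re = traceNorm A + A.trace.re := by
  have hpos_part : specProjNonneg hA * A = hA.cfc fun x => if 0 ≤ x then x else 0 := by
    conv_lhs => arg 2; rw [← hA.cfc_id]
    rw [specProjNonneg_eq_cfc, ← hA.cfc_mul]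
    congr with x
    simp
  rw [hpos_part, hA.trace_cfc, hA.traceNorm_eq_sum_abs_eigenvalues, hA.trace_eq_sum_eigenvalues]
  simp only [Complex.coe_algebraMap, Complex.re_sum, Complex.ofReal_re, Finset.mul_sum,
    ← Finset.sum_add_distrib]
  refine Finset.sum_congr rfl fun i _ => ?_
  split_ifs with h
  · rw [abs_of_nonneg h]; ring
  · rw [abs_of_neg (not_le.mp h)]; ring

end SpecProjNonneg

theorem helstrom_projection_bound_general {d : ℕ} (σ σ' : Matrix (Fin d) (Fin d) ℂ)
    (hσ : IsDensity σ) (hσ' : IsDensity σ') (g g' : ℝ) (hg : 0 < g) (hg' : 0 < g')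
    (hA : (g • σ - g' • σ').IsHermitian) (δ : ℝ)
    (htr : |traceNorm (g • σ - g' • σ') - (g + g')| ≤ δ) :
    |((specProjNonneg hA * σ).trace).re - 1| ≤ δ / (2 * g) ∧
      |(((1 - specProjNonneg hA) * σ').trace).re - 1| ≤ δ / (2 * g') := by
  set P := specProjNonneg hA
  set x := (P * σ).trace.re
  set y := (P * σ').trace.re
  have hx : x ≤ 1 := by
    have := (posSemidef_one_sub_specProjNonneg hA).re_trace_mul_nonneg hσ.1
    rw [re_trace_one_sub_mul hσ.2] at this
    linarith
  have hy : 0 ≤ y := (posSemidef_specProjNonneg hA).re_trace_mul_nonneg hσ'.1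
  have hPA : (P * (g • σ - g' • σ')).trace.re = g * x - g' * y := by
    simp [Matrix.mul_sub, trace_sub, x, y]
  have hA_trace : (g • σ - g' • σ').trace.re = g - g' := by
    simp [trace_sub, hσ.2, hσ'.2]
  have htwo_pos_part := two_mul_re_trace_specProjNonneg_mul hA
  rw [hPA, hA_trace] at htwo_pos_part
  have hdeficit : 2 * (g * (1 - x) + g' * y) ≤ δ := by linarith [(abs_le.mp htr).1]
  rw [re_trace_one_sub_mul hσ'.2, sub_sub_cancel_left, abs_neg, abs_of_nonneg hy,
    abs_of_nonpos (by linarith), le_div_iff₀ (by positivity), le_div_iff₀ (by positivity)]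
  constructor <;> linarith [mul_nonneg hg.le (sub_nonneg.mpr hx), mul_nonneg hg'.le hy]

/-- Helstrom projection lemma. -/
theorem helstrom_projection_bound {d : ℕ} (σ σ' : Matrix (Fin d) (Fin d) ℂ)
    (hσ : IsDensity σ) (hσ' : IsDensity σ') (g g' : ℝ) (hg : 0 < g) (hg' : 0 < g')
    (hA : (g • σ - g' • σ').IsHermitian) (δ : ℝ) (hδ : 0 ≤ δ)
    (htr : |traceNorm (g • σ - g' • σ') - (g + g')| ≤ δ) :
    |((specProjNonneg hA * σ).trace).re - 1| ≤ δ / (2 * g) ∧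
      |(((1 - specProjNonneg hA) * σ').trace).re - 1| ≤ δ / (2 * g') :=
  helstrom_projection_bound_general σ σ' hσ hσ' g g' hg hg' hA δ htr

end
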